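/- For all x, z ∈ ℂ with x·(x−1)·(x+1) ≠ 0 and z·(z−1)·(z+1) ≠ 0, the equality (4/27)·(z⁴−z²+1)³/(z⁴(z−1)²(z+1)²) = (1/108)·(16x⁴−16x²+1)³/(x²(x−1)(x+1)) holds if and only if ((z−1)² + 4x²z)·((z+1)² − 4x²z)·(16(x⁴−x²)(z⁴−z²) − 1)·(16(x⁴−x²)(z²−1) + z⁴) = 0. -/

import Mathlib

theorem JII_JV_cross_difference_factorization {R : Type*} [CommRing R] (x z : R) :
    16 * (z ^ 4 - z ^ 2 + 1) ^ 3 * (x ^ 2 * (x - 1) * (x + 1)) -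
        (16 * x ^ 4 - 16 * x ^ 2 + 1) ^ 3 * (z ^ 4 * (z - 1) ^ 2 * (z + 1) ^ 2) =
      ((z - 1) ^ 2 + 4 * x ^ 2 * z) * ((z + 1) ^ 2 - 4 * x ^ 2 * z)
        * (16 * (x ^ 4 - x ^ 2) * (z ^ 4 - z ^ 2) - 1)
        * (16 * (x ^ 4 - x ^ 2) * (z ^ 2 - 1) + z ^ 4) := by
  ring

theorem JII_eq_JV_factorization (x z : ℂ)
    (hx : x * (x - 1) * (x + 1) ≠ 0) (hz : z * (z - 1) * (z + 1) ≠ 0) :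
    (4 / 27) * (z ^ 4 - z ^ 2 + 1) ^ 3 / (z ^ 4 * (z - 1) ^ 2 * (z + 1) ^ 2) =
      (1 / 108) * (16 * x ^ 4 - 16 * x ^ 2 + 1) ^ 3 / (x ^ 2 * (x - 1) * (x + 1)) ↔
    ((z - 1) ^ 2 + 4 * x ^ 2 * z) * ((z + 1) ^ 2 - 4 * x ^ 2 * z)
      * (16 * (x ^ 4 - x ^ 2) * (z ^ 4 - z ^ 2) - 1)
      * (16 * (x ^ 4 - x ^ 2) * (z ^ 2 - 1) + z ^ 4) = 0 := by
  have hz0 : z ≠ 0 := left_ne_zero_of_mul (left_ne_zero_of_mul hz)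
  have hx0 : x ≠ 0 := left_ne_zero_of_mul (left_ne_zero_of_mul hx)
  have hDz : z ^ 4 * (z - 1) ^ 2 * (z + 1) ^ 2 ≠ 0 := by
    convert mul_ne_zero (pow_ne_zero 2 hz0) (pow_ne_zero 2 hz) using 1; ring
  have hDx : x ^ 2 * (x - 1) * (x + 1) ≠ 0 := by
    convert mul_ne_zero hx0 hx using 1; ring
  rw [div_eq_div_iff hDz hDx, ← JII_JV_cross_difference_factorization, sub_eq_zero]
  constructor <;> intro h
  · linear_combination 108 * h
  · linear_combination h / 108
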